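/- Let r ≥ 3, A ∈ 𝒯_r and e_0 ∈ E(A). Let ρ = R(d(e_0)) (the rightmost leaf label in Leaf(e_0)), let s ∈ Leaf(e_0) with s ≠ ρ, and let i ∈ {1,…,r} ∖ Leaf(e_0). Then there exists a formal power series g ∈ ℂ[[ζ_e : e ∈ E(A)]] such that (z_s − z_ρ) ∘ Φ_A = ζ_{e_0} · g · ((z_ρ − z_i) ∘ Φ_A) holds in the ring ℂ[x_A][[ζ_e : e ∈ E(A)]]; that is, the expansion of (z_s − z_ρ)/(z_ρ − z_i) in A-coordinates lies in ζ_{e_0}·ℂ[[ζ_e : e ∈ E(A)]]. -/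

import Mathlib

noncomputable section

/-- A plane (rooted) binary tree with leaves labeled by elements of `Fin r`. -/
inductive PTree (r : ℕ) : Type
  | leaf : Fin r → PTree r
  | node : PTree r → PTree r → PTree r

namespace PTree

variable {r : ℕ}

/-- The labels of the leaves of the tree, listed from left to right. -/
def leafLabels : PTree r → List (Fin r)
  | .leaf i => [i]
  | .node l t => l.leafLabels ++ t.leafLabels

/-- `A ∈ 𝒯_r`: the `r` leaves of `A` are labeled bijectively by `Fin r`. -/
def IsTree (A : PTree r) : Prop :=
  A.leafLabels.Nodup ∧ A.leafLabels.length = r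

/-- The label of the rightmost leaf of the tree. -/
def rightmost : PTree r → Fin r
  | .leaf i => i
  | .node _ t => t.rightmost

/-- The subtree of a tree at the address `p` (`false` = go to the left child,
`true` = go to the right child), if the address is valid. -/
def subtreeAt : PTree r → List Bool → Option (PTree r)
  | t, [] => some t
  | .leaf _, _ :: _ => none
  | .node l t, b :: p => (if b then t else l).subtreeAt p

/-- `p` is the address of an internal (non-leaf) vertex of `A`; the set of such
addresses is `V(A)`. -/
def IsVertex (A : PTree r) (p : List Bool) : Prop :=
  ∃ l t : PTree r, A.subtreeAt p = some (.node l t)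

/-- `p` is the address of the lower endpoint `d(e)` of an internal edge `e` of
`A` (an edge not adjacent to a leaf); the upper endpoint `u(e)` is at the
address `p.dropLast`.  The set of such addresses is `E(A)`. -/
def IsEdge (A : PTree r) (p : List Bool) : Prop :=
  p ≠ [] ∧ A.IsVertex p

/-- The type `E(A)` of internal edges of `A`. -/
abbrev Edge (A : PTree r) : Type := {p : List Bool // A.IsEdge p}

/-- `x_v = z_{L(v)} − z_{R(v)}` for the internal vertex `v` given as the
subtree rooted at it (junk value `0` at leaves). -/
def xval (z : Fin r → ℂ) : PTree r → ℂ
  | .leaf _ => 0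
  | .node l t => z l.rightmost - z t.rightmost

/-- The coordinate `x_v` for the vertex `v` of `A` with address `p`. -/
def xAt (A : PTree r) (z : Fin r → ℂ) (p : List Bool) : ℂ :=
  match A.subtreeAt p with
  | some t => xval z t
  | none => 0

/-- The coordinate `ζ_e = x_{d(e)} / x_{u(e)}` for the edge of `A` whose lower
endpoint has address `p` (its upper endpoint has address `p.dropLast`). -/
def zetaAt (A : PTree r) (z : Fin r → ℂ) (p : List Bool) : ℂ :=
  xAt A z p / xAt A z p.dropLast

/-- `Leaf(e)`: the labels of the leaves descending from the vertex of `A` with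
address `p`. -/
def leavesAt (A : PTree r) (p : List Bool) : List (Fin r) :=
  ((A.subtreeAt p).map leafLabels).getD []

/-- The label of the rightmost leaf descending from the vertex of `A` with
address `p`. -/
def rightmostAt (A : PTree r) (p : List Bool) : Option (Fin r) :=
  (A.subtreeAt p).map rightmost

end PTree

/-- The configuration space `X_r = {(z_1,…,z_r) ∈ ℂ^r : z_i ≠ z_j for i ≠ j}`. -/
def ConfigSpace (r : ℕ) : Set (Fin r → ℂ) :=
  {z | ∀ i j : Fin r, i ≠ j → z i ≠ z j}

namespace PTree

variable {r : ℕ}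

/-- The `A`-coordinate map `Ψ_A = (z_A, x_A, (ζ_e)_{e ∈ E(A)})`, where
`z_A = z_{r_A}` (`r_A` the rightmost leaf of `A`) and `x_A = x_{t_A}` (`t_A`
the root of `A`). -/
def psi (A : PTree r) (z : Fin r → ℂ) : ℂ × ℂ × (A.Edge → ℂ) :=
  (z A.rightmost, xval z A, fun e => A.zetaAt z e.1)

/-- The variable index type for the polynomial ring
`ℂ[z_A, x_A, ζ_e (e ∈ E(A))]`. -/
abbrev Idx (A : PTree r) : Type := Unit ⊕ Unit ⊕ A.Edge

/-- The point of `ℂ^{Idx A}` corresponding to `w = (z_A, x_A, (ζ_e)_e)`. -/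
def assign (A : PTree r) (w : ℂ × ℂ × (A.Edge → ℂ)) : A.Idx → ℂ :=
  Sum.elim (fun _ => w.1) (Sum.elim (fun _ => w.2.1) fun e => w.2.2 e)

/-- The polynomial map `Φ_A : ℂ × ℂ × ℂ^{E(A)} → ℂ^r` determined by a family
of polynomials `P`. -/
def phiMap (A : PTree r) (P : Fin r → MvPolynomial A.Idx ℂ)
    (w : ℂ × ℂ × (A.Edge → ℂ)) : Fin r → ℂ :=
  fun i => MvPolynomial.eval (A.assign w) (P i)

/-- `Φ_A ∘ Ψ_A = id` on `X_r`. -/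
def PhiPsiId (A : PTree r) (P : Fin r → MvPolynomial A.Idx ℂ) : Prop :=
  ∀ z ∈ ConfigSpace r, A.phiMap P (A.psi z) = z

/-- `Ψ_A ∘ Φ_A = id` on `ℂ × ℂ^× × (ℂ^×)^{E(A)}`. -/
def PsiPhiId (A : PTree r) (P : Fin r → MvPolynomial A.Idx ℂ) : Prop :=
  ∀ w : ℂ × ℂ × (A.Edge → ℂ), w.2.1 ≠ 0 → (∀ e, w.2.2 e ≠ 0) →
    A.psi (A.phiMap P w) = w

end PTree

/-!
Pulled back along `Φ_A`, the identity `Ψ_A ∘ Φ_A = id` says `x_{d(e)} = ζ_e · x_{u(e)}` as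
polynomials (it holds on the dense torus `x_A ≠ 0, ζ_e ≠ 0`). Hence `x_w = x_v · M` for every
descendant `w` of a vertex `v`, and `z_j − z_{R(v)} = x_v · W` for every leaf `j` below `v`, where
`M` and `W` are polynomials in the `ζ_e` alone and `W(0)` is `1` or `0` according as `j` lies below
the left or the right child of `v`. At `d(e₀)` this gives `z_s − z_ρ = x_{d(e₀)} · W`. At the vertex
`v` where the paths to `ρ` and to `i` part, `z_ρ − z_i = x_v · U` with `U(0) = ±1`, so `U` is a unit
of `ℂ[[ζ]]`, while `x_{d(e₀)} = x_v · M · ζ_{e₀}`. Therefore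
`z_s − z_ρ = ζ_{e₀} · (W M U⁻¹) · (z_ρ − z_i)`.
-/

namespace MvPowerSeries

variable {σ R : Type*} [CommSemiring R]

def supported (s : Set σ) : Subalgebra R (MvPowerSeries σ R) where
  carrier := {f | ∀ m, coeff m f ≠ 0 → ↑m.support ⊆ s}
  mul_mem' {f g} hf hg m hm := by
    classical
    rw [coeff_mul] at hm
    obtain ⟨⟨a, b⟩, hab, hne⟩ := Finset.exists_ne_zero_of_sum_ne_zero hm
    rw [Finset.HasAntidiagonal.mem_antidiagonal] at hab
    subst hab
    refine (Finset.coe_subset.mpr Finsupp.support_add).trans ?_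
    push_cast
    exact Set.union_subset (hf a (left_ne_zero_of_mul hne)) (hg b (right_ne_zero_of_mul hne))
  add_mem' {f g} hf hg m hm := by
    rw [map_add] at hm
    by_cases hfm : coeff m f = 0
    · exact hg m (by simpa [hfm] using hm)
    · exact hf m hfm
  algebraMap_mem' c m hm := by
    classical
    rw [algebraMap_apply, Algebra.algebraMap_self, RingHom.id_apply, coeff_C] at hm
    simp [(ite_ne_right_iff.mp hm).1]

theorem inv_mem_supported {k : Type*} [Field k] {s : Set σ} {f : MvPowerSeries σ k}
    (hf : f ∈ supported s) : f⁻¹ ∈ supported s := by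
  classical
  intro m
  induction m using WellFoundedLT.induction with
  | ind m ih =>
    intro hm
    rw [coeff_inv] at hm
    split_ifs at hm with h0
    · simp [h0]
    obtain ⟨⟨a, b⟩, hab, hne⟩ := Finset.exists_ne_zero_of_sum_ne_zero (right_ne_zero_of_mul hm)
    rw [Finset.HasAntidiagonal.mem_antidiagonal] at hab
    subst hab
    have hlt : b < a + b := (ite_ne_right_iff.mp hne).1
    have hne' := (ite_ne_right_iff.mp hne).2
    refine (Finset.coe_subset.mpr Finsupp.support_add).trans ?_
    push_cast
    exact Set.union_subset (hf a (left_ne_zero_of_mul hne')) (ih b hlt (right_ne_zero_of_mul hne'))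

end MvPowerSeries

theorem MvPolynomial.coe_mem_supported {σ R : Type*} [CommSemiring R] {s : Set σ}
    {p : MvPolynomial σ R} (hp : p ∈ supported R s) :
    (p : MvPowerSeries σ R) ∈ MvPowerSeries.supported s := by
  classical
  intro m hm i hi
  rw [coeff_coe] at hm
  exact (mem_supported.mp hp) ((mem_vars_iff_mem_support i).mpr ⟨m, mem_support_iff.mpr hm, hi⟩)

namespace PTree

variable {r : ℕ}

theorem subtreeAt_append (B : PTree r) (p q : List Bool) :
    B.subtreeAt (p ++ q) = (B.subtreeAt p).bind (·.subtreeAt q) := by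
  induction p generalizing B with
  | nil => rfl
  | cons b p ih =>
    cases B with
    | leaf => rfl
    | node l t => exact ih _

theorem subtreeAt_concat {A l t : PTree r} {p : List Bool}
    (hv : A.subtreeAt p = some (node l t)) (b : Bool) :
    A.subtreeAt (p ++ [b]) = some (if b then t else l) := by
  rw [subtreeAt_append, hv]
  cases b <;> rfl

theorem mem_leafLabels_of_subtreeAt {B C : PTree r} {q : List Bool}
    (h : B.subtreeAt q = some C) {j : Fin r} (hj : j ∈ C.leafLabels) :
    j ∈ B.leafLabels := by
  induction q generalizing B with
  | nil => cases h; exact hj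
  | cons b q ih =>
    cases B with
    | leaf => cases h
    | node l t =>
      rw [leafLabels, List.mem_append]
      cases b
      · exact .inl (ih h)
      · exact .inr (ih h)

theorem rightmost_mem_leafLabels (B : PTree r) : B.rightmost ∈ B.leafLabels := by
  induction B with
  | leaf => exact List.mem_singleton_self _
  | node _ _ _ iht => exact List.mem_append_right _ iht

theorem IsTree.mem_leafLabels {A : PTree r} (hA : A.IsTree) (i : Fin r) : i ∈ A.leafLabels := by
  have huniv : A.leafLabels.toFinset = Finset.univ :=
    Finset.eq_univ_of_card _ (by rw [List.toFinset_card_of_nodup hA.1, hA.2, Fintype.card_fin])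
  simpa [huniv] using List.mem_toFinset.mp (huniv ▸ Finset.mem_univ i)

theorem exists_fork {B C : PTree r} {q : List Bool} {i : Fin r}
    (hC : B.subtreeAt q = some C) (hiB : i ∈ B.leafLabels) (hiC : i ∉ C.leafLabels) :
    ∃ p b rest l t, q = p ++ b :: rest ∧ B.subtreeAt p = some (node l t) ∧
      (if b then t else l).subtreeAt rest = some C ∧ i ∈ (if b then l else t).leafLabels := by
  induction q generalizing B with
  | nil => cases hC; exact absurd hiB hiC
  | cons b q ih =>
    cases B with
    | leaf => cases hC
    | node l t =>
      by_cases hi : i ∈ (if b then t else l).leafLabels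
      · obtain ⟨p, b', rest, l', t', rfl, hv, hCv, hi'⟩ := ih hC hi
        exact ⟨b :: p, b', rest, l', t', rfl, hv, hCv, hi'⟩
      · refine ⟨[], b, q, l, t, rfl, rfl, hC, ?_⟩
        cases b <;> simp_all [leafLabels]

open MvPolynomial

variable {A : PTree r} {P : Fin r → MvPolynomial A.Idx ℂ}

def zetaVars (A : PTree r) : Set A.Idx := Set.range fun e : A.Edge => Sum.inr (Sum.inr e)

def xPoly {R : Type*} [CommRing R] (P : Fin r → R) : PTree r → R
  | .leaf _ => 0
  | .node l t => P l.rightmost - P t.rightmost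

/-- `x_v ∘ Φ_A` for the vertex `v` of `A` at address `p`, with `z_j ∘ Φ_A = P j`. -/
def xPolyAt {R : Type*} [CommRing R] (A : PTree r) (P : Fin r → R) (p : List Bool) : R :=
  match A.subtreeAt p with
  | some t => xPoly P t
  | none => 0

theorem xPolyAt_of_subtreeAt {R : Type*} [CommRing R] {P : Fin r → R} {p : List Bool}
    {B : PTree r} (h : A.subtreeAt p = some B) : A.xPolyAt P p = xPoly P B := by
  rw [xPolyAt, h]

theorem xPolyAt_eq_zero_of_not_isVertex {R : Type*} [CommRing R] {P : Fin r → R}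
    {p : List Bool} (h : ¬A.IsVertex p) : A.xPolyAt P p = 0 := by
  unfold xPolyAt
  match hp : A.subtreeAt p with
  | none => rfl
  | some (.leaf _) => rfl
  | some (.node l t) => exact absurd ⟨l, t, hp⟩ h

theorem eval_assign_xPolyAt (w : ℂ × ℂ × (A.Edge → ℂ)) (p : List Bool) :
    eval (A.assign w) (A.xPolyAt P p) = A.xAt (A.phiMap P w) p := by
  unfold xPolyAt xAt
  match A.subtreeAt p with
  | none => simp
  | some (.leaf _) => simp [xPoly, xval]
  | some (.node _ _) => simp [xPoly, xval, phiMap]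

theorem eq_of_eval_assign_eq {p q : MvPolynomial A.Idx ℂ}
    (h : ∀ w : ℂ × ℂ × (A.Edge → ℂ), w.2.1 ≠ 0 → (∀ e, w.2.2 e ≠ 0) →
      eval (A.assign w) p = eval (A.assign w) q) : p = q := by
  refine funext_set (fun _ => {0}ᶜ) (fun _ => (Set.finite_singleton 0).infinite_compl)
    fun x hx => ?_
  have hx' : A.assign (x (.inl ()), x (.inr (.inl ())), fun e => x (.inr (.inr e))) = x := by
    funext j
    rcases j with _ | _ | _ <;> rfl
  rw [← hx']
  exact h _ (hx _ trivial) fun _ => hx _ trivial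

theorem xPolyAt_edge (hP : A.PsiPhiId P) (e : A.Edge) :
    A.xPolyAt P e.1 = A.xPolyAt P e.1.dropLast * X (Sum.inr (Sum.inr e)) := by
  refine eq_of_eval_assign_eq fun w hx hζ => ?_
  have hζe : A.zetaAt (A.phiMap P w) e.1 = w.2.2 e :=
    congrFun (congrArg (·.2.2) (hP w hx hζ)) e
  rw [zetaAt] at hζe
  have hden : A.xAt (A.phiMap P w) e.1.dropLast ≠ 0 := fun h0 =>
    hζ e (by rw [← hζe, h0, div_zero])
  rw [eval_mul, eval_X, eval_assign_xPolyAt, eval_assign_xPolyAt, (div_eq_iff hden).mp hζe,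
    mul_comm]
  rfl

theorem exists_xPolyAt_concat_eq (hP : A.PsiPhiId P) (p : List Bool) (b : Bool) :
    ∃ Z ∈ supported ℂ A.zetaVars, constantCoeff Z = 0 ∧
      A.xPolyAt P (p ++ [b]) = A.xPolyAt P p * Z := by
  by_cases hv : A.IsVertex (p ++ [b])
  · let e : A.Edge := ⟨p ++ [b], by simp, hv⟩
    refine ⟨X (Sum.inr (Sum.inr e)), X_mem_supported.mpr ⟨e, rfl⟩, constantCoeff_X ℂ _, ?_⟩
    simpa [e] using xPolyAt_edge hP e
  · exact ⟨0, zero_mem _, map_zero _, by rw [xPolyAt_eq_zero_of_not_isVertex hv, mul_zero]⟩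

theorem exists_xPolyAt_append_eq (hP : A.PsiPhiId P) (p q : List Bool) :
    ∃ M ∈ supported ℂ A.zetaVars, A.xPolyAt P (p ++ q) = A.xPolyAt P p * M := by
  induction q generalizing p with
  | nil => exact ⟨1, one_mem _, by simp⟩
  | cons b q ih =>
    obtain ⟨Z, hZ, -, hpb⟩ := exists_xPolyAt_concat_eq hP p b
    obtain ⟨M, hM, hq⟩ := ih (p ++ [b])
    refine ⟨Z * M, mul_mem hZ hM, ?_⟩
    rw [show p ++ b :: q = p ++ [b] ++ q by simp, hq, hpb, mul_assoc]

theorem exists_xPolyAt_edge_eq (hP : A.PsiPhiId P) (p : List Bool) {q : List Bool}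
    (hq : q ≠ []) (he : A.IsEdge (p ++ q)) :
    ∃ M ∈ supported ℂ A.zetaVars,
      A.xPolyAt P (p ++ q) = A.xPolyAt P p * M * X (Sum.inr (Sum.inr ⟨p ++ q, he⟩)) := by
  obtain ⟨M, hM, hpath⟩ := exists_xPolyAt_append_eq hP p q.dropLast
  refine ⟨M, hM, ?_⟩
  have hedge := xPolyAt_edge hP ⟨p ++ q, he⟩
  dsimp only at hedge
  rw [hedge, List.dropLast_append_of_ne_nil hq, hpath]

/-- The constant term `(if b then 0 else 1)` is `(z_j − z_{R(v)})/x_v` at `ζ = 0`, where the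
leaves below the child in direction `b` of `v` collapse onto that child's rightmost leaf. -/
theorem exists_sub_rightmost_eq_of_child (hP : A.PsiPhiId P) {p : List Bool} {l t : PTree r}
    (hv : A.subtreeAt p = some (node l t)) (b : Bool) {j : Fin r} {W : MvPolynomial A.Idx ℂ}
    (hW : W ∈ supported ℂ A.zetaVars)
    (hj : P j - P (if b then t else l).rightmost = A.xPolyAt P (p ++ [b]) * W) :
    ∃ W' ∈ supported ℂ A.zetaVars, constantCoeff W' = (if b then 0 else 1) ∧
      P j - P (node l t).rightmost = A.xPolyAt P p * W' := by
  obtain ⟨Z, hZ, hZ0, hchild⟩ := exists_xPolyAt_concat_eq hP p b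
  have hxv : A.xPolyAt P p = P l.rightmost - P t.rightmost := xPolyAt_of_subtreeAt hv
  have hc : (if b then 0 else 1 : MvPolynomial A.Idx ℂ) ∈ supported ℂ A.zetaVars := by
    split_ifs
    exacts [zero_mem _, one_mem _]
  refine ⟨Z * W + (if b then 0 else 1), add_mem (mul_mem hZ hW) hc, ?_, ?_⟩
  · cases b <;> simp [hZ0]
  · rw [hchild] at hj
    cases b
    · simp only [Bool.false_eq_true, if_false, rightmost] at hj ⊢
      linear_combination hj - hxv
    · simp only [if_true, rightmost] at hj ⊢
      linear_combination hj

theorem exists_sub_rightmost_eq (hP : A.PsiPhiId P) :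
    ∀ {B : PTree r} {p : List Bool}, A.subtreeAt p = some B → ∀ j ∈ B.leafLabels,
      ∃ W ∈ supported ℂ A.zetaVars, P j - P B.rightmost = A.xPolyAt P p * W := by
  intro B
  induction B with
  | leaf a =>
    intro p _ j hj
    rw [leafLabels, List.mem_singleton] at hj
    exact ⟨0, zero_mem _, by simp [hj, rightmost]⟩
  | node l t ihl iht =>
    intro p hv j hj
    rcases List.mem_append.mp hj with hj | hj
    · obtain ⟨W, hW, h⟩ := ihl (subtreeAt_concat hv false) j hj
      obtain ⟨W', hW', -, h'⟩ := exists_sub_rightmost_eq_of_child hP hv false hW h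
      exact ⟨W', hW', h'⟩
    · obtain ⟨W, hW, h⟩ := iht (subtreeAt_concat hv true) j hj
      obtain ⟨W', hW', -, h'⟩ := exists_sub_rightmost_eq_of_child hP hv true hW h
      exact ⟨W', hW', h'⟩

theorem exists_sub_rightmost_eq_of_mem_child (hP : A.PsiPhiId P) {p : List Bool}
    {l t : PTree r} (hv : A.subtreeAt p = some (node l t)) (b : Bool) {j : Fin r}
    (hj : j ∈ (if b then t else l).leafLabels) :
    ∃ W ∈ supported ℂ A.zetaVars, constantCoeff W = (if b then 0 else 1) ∧
      P j - P (node l t).rightmost = A.xPolyAt P p * W :=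
  let ⟨_, hW, h⟩ := exists_sub_rightmost_eq hP (subtreeAt_concat hv b) j hj
  exists_sub_rightmost_eq_of_child hP hv b hW h

theorem exists_xPolyAt_mul_eq (hP : A.PsiPhiId P) {e : List Bool} (he : A.IsEdge e)
    {C : PTree r} (hC : A.subtreeAt e = some C) {i : Fin r} (hiA : i ∈ A.leafLabels)
    (hiC : i ∉ C.leafLabels) :
    ∃ U ∈ supported ℂ A.zetaVars, ∃ N ∈ supported ℂ A.zetaVars, constantCoeff U ≠ 0 ∧
      A.xPolyAt P e * U = (P C.rightmost - P i) * N * X (Sum.inr (Sum.inr ⟨e, he⟩)) := by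
  obtain ⟨p, b, rest, l, t, rfl, hv, hCv, hi⟩ := exists_fork hC hiA hiC
  obtain ⟨Wρ, hWρ, hρ0, hρ⟩ := exists_sub_rightmost_eq_of_mem_child hP hv b
    (mem_leafLabels_of_subtreeAt hCv (rightmost_mem_leafLabels C))
  obtain ⟨Wi, hWi, hi0, hi⟩ := exists_sub_rightmost_eq_of_mem_child hP hv (!b)
    (by cases b <;> simpa using hi)
  obtain ⟨M, hM, hpath⟩ := exists_xPolyAt_edge_eq hP p (List.cons_ne_nil b rest) he
  refine ⟨Wρ - Wi, sub_mem hWρ hWi, M, hM, by cases b <;> simp [hρ0, hi0], ?_⟩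
  rw [hpath]
  linear_combination (M * X (Sum.inr (Sum.inr ⟨p ++ b :: rest, he⟩))) * (hi - hρ)

end PTree

theorem stmt_11_general {r : ℕ} (A : PTree r) (hA : A.IsTree)
    (e₀ : List Bool) (he₀ : A.IsEdge e₀)
    (ρ : Fin r) (hρ : A.rightmostAt e₀ = some ρ)
    (s : Fin r) (hs : s ∈ A.leavesAt e₀)
    (i : Fin r) (hi : i ∉ A.leavesAt e₀)
    (P : Fin r → MvPolynomial A.Idx ℂ)
    (hPsiPhi : A.PsiPhiId P) :
    ∃ g : MvPowerSeries A.Idx ℂ,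
      (∀ m : A.Idx →₀ ℕ,
          (m (Sum.inl ()) ≠ 0 ∨ m (Sum.inr (Sum.inl ())) ≠ 0) →
            MvPowerSeries.coeff m g = 0) ∧
      ((P s - P ρ : MvPolynomial A.Idx ℂ) : MvPowerSeries A.Idx ℂ) =
        MvPowerSeries.X (Sum.inr (Sum.inr ⟨e₀, he₀⟩)) * g *
          ((P ρ - P i : MvPolynomial A.Idx ℂ) : MvPowerSeries A.Idx ℂ) := by
  obtain ⟨C, hC, rfl⟩ := Option.map_eq_some_iff.mp hρ
  have hsC : s ∈ C.leafLabels := by simpa [PTree.leavesAt, hC] using hs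
  have hiC : i ∉ C.leafLabels := by simpa [PTree.leavesAt, hC] using hi
  obtain ⟨W, hW, hsW⟩ := PTree.exists_sub_rightmost_eq hPsiPhi hC s hsC
  obtain ⟨U, hU, N, hN, hU0, hUN⟩ :=
    PTree.exists_xPolyAt_mul_eq hPsiPhi he₀ hC (hA.mem_leafLabels i) hiC
  have hUU : (U : MvPowerSeries A.Idx ℂ) * (U : MvPowerSeries A.Idx ℂ)⁻¹ = 1 :=
    MvPowerSeries.mul_inv_cancel _ (by
      rwa [← MvPowerSeries.coeff_zero_eq_constantCoeff_apply, MvPolynomial.coeff_coe,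
        ← MvPolynomial.constantCoeff_eq])
  have hg : (W * N * (U : MvPowerSeries A.Idx ℂ)⁻¹ : MvPowerSeries A.Idx ℂ) ∈
      MvPowerSeries.supported A.zetaVars :=
    mul_mem (mul_mem (MvPolynomial.coe_mem_supported hW) (MvPolynomial.coe_mem_supported hN))
      (MvPowerSeries.inv_mem_supported (MvPolynomial.coe_mem_supported hU))
  refine ⟨W * N * (U : MvPowerSeries A.Idx ℂ)⁻¹, fun m hm => by_contra fun hne => ?_, ?_⟩
  · rcases hm with h | h <;>
      simpa [PTree.zetaVars] using hg m hne (Finset.mem_coe.mpr (Finsupp.mem_support_iff.mpr h))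
  · have hsW' := congrArg ((↑) : MvPolynomial A.Idx ℂ → MvPowerSeries A.Idx ℂ) hsW
    have hUN' := congrArg ((↑) : MvPolynomial A.Idx ℂ → MvPowerSeries A.Idx ℂ) hUN
    push_cast at hsW' hUN'
    rw [hsW']
    linear_combination (W * (U : MvPowerSeries A.Idx ℂ)⁻¹) * hUN'
      - (A.xPolyAt P e₀ * W : MvPowerSeries A.Idx ℂ) * hUU

/-- Let `r ≥ 3`, `A ∈ 𝒯_r` and `e₀ ∈ E(A)`; let `ρ = R(d(e₀))` be the
rightmost leaf label in `Leaf(e₀)`, let `s ∈ Leaf(e₀)` with `s ≠ ρ`, and let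
`i ∉ Leaf(e₀)`.  Let `Φ_A` (with components the polynomials `P i`) be the
polynomial map inverting `Ψ_A`.  Then there exists a formal power series `g`
in the variables `ζ_e (e ∈ E(A))` only, such that
`(z_s − z_ρ) ∘ Φ_A = ζ_{e₀} · g · ((z_ρ − z_i) ∘ Φ_A)` holds in the ring of
formal power series in `(z_A, x_A, (ζ_e)_{e∈E(A)})`; that is, the expansion of
`(z_s − z_ρ)/(z_ρ − z_i)` in `A`-coordinates lies in
`ζ_{e₀}·ℂ[[ζ_e : e ∈ E(A)]]`. -/
theorem stmt_11 {r : ℕ} (hr : 3 ≤ r) (A : PTree r) (hA : A.IsTree)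
    (e₀ : List Bool) (he₀ : A.IsEdge e₀)
    (ρ : Fin r) (hρ : A.rightmostAt e₀ = some ρ)
    (s : Fin r) (hs : s ∈ A.leavesAt e₀) (hsρ : s ≠ ρ)
    (i : Fin r) (hi : i ∉ A.leavesAt e₀)
    (P : Fin r → MvPolynomial A.Idx ℂ)
    (hPhiPsi : A.PhiPsiId P) (hPsiPhi : A.PsiPhiId P) :
    ∃ g : MvPowerSeries A.Idx ℂ,
      (∀ m : A.Idx →₀ ℕ,
          (m (Sum.inl ()) ≠ 0 ∨ m (Sum.inr (Sum.inl ())) ≠ 0) →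
            MvPowerSeries.coeff m g = 0) ∧
      ((P s - P ρ : MvPolynomial A.Idx ℂ) : MvPowerSeries A.Idx ℂ) =
        MvPowerSeries.X (Sum.inr (Sum.inr ⟨e₀, he₀⟩)) * g *
          ((P ρ - P i : MvPolynomial A.Idx ℂ) : MvPowerSeries A.Idx ℂ) :=
  stmt_11_general A hA e₀ he₀ ρ hρ s hs i hi P hPsiPhi
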